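/- In SL(2,ℤ), any matrix of the form (σ̄₁σ̄₂σ̄₁)^{2n} W where n ≥ 1 and W is a product of matrices σ̄₁⁻¹ = [[1,0],[1,1]] and σ̄₂ = [[1,1],[0,1]] containing at least one factor of each, has all entries of the same sign and has trace of absolute value strictly greater than 2 (i.e., it is hyperbolic). -/

import Mathlib

/-!
Both generators `σ̄₁⁻¹` and `σ̄₂` dominate the identity entrywise, and for nonnegative
matrices `A ≤ A * B` and `B ≤ A * B` whenever the other factor dominates the identity.
Hence `W` dominates every factor, so `W ≥ [[1,1],[1,1]]`: all entries of `W` are positive,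
and `det W = 1` then forces `trace W > 2`. Finally `(σ̄₁σ̄₂σ̄₁)^{2n} = (-1)ⁿ`, so `M = ±W`.
-/

/-- `σ̄₁ = [[1,0],[-1,1]]` in `SL(2,ℤ)`. -/
def sbar₁ : Matrix.SpecialLinearGroup (Fin 2) ℤ := ⟨!![1, 0; -1, 1], by decide⟩

/-- `σ̄₂ = [[1,1],[0,1]]` in `SL(2,ℤ)`. -/
def sbar₂ : Matrix.SpecialLinearGroup (Fin 2) ℤ := ⟨!![1, 1; 0, 1], by decide⟩

namespace Matrix

section EntrywiseOrder

variable {n R : Type*} [Fintype n] [DecidableEq n] [Semiring R] [PartialOrder R]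
  [IsOrderedRing R]

omit [Fintype n] in
lemma one_apply_nonneg (i j : n) : 0 ≤ (1 : Matrix n n R) i j := by
  rw [one_apply]
  split_ifs <;> simp

lemma apply_le_mul_apply_of_one_le_right {A B : Matrix n n R} (hA : ∀ i j, 0 ≤ A i j)
    (hB : ∀ i j, (1 : Matrix n n R) i j ≤ B i j) (i j : n) : A i j ≤ (A * B) i j := by
  have hB₀ : ∀ k, 0 ≤ A i k * B k j := fun k =>
    mul_nonneg (hA i k) ((one_apply_nonneg k j).trans (hB k j))
  calc A i j ≤ A i j * B j j := le_mul_of_one_le_right (hA i j) (by simpa using hB j j)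
    _ ≤ ∑ k, A i k * B k j := Finset.single_le_sum (fun k _ => hB₀ k) (Finset.mem_univ j)

lemma apply_le_mul_apply_of_one_le_left {A B : Matrix n n R}
    (hA : ∀ i j, (1 : Matrix n n R) i j ≤ A i j) (hB : ∀ i j, 0 ≤ B i j) (i j : n) :
    B i j ≤ (A * B) i j := by
  have hA₀ : ∀ k, 0 ≤ A i k * B k j := fun k =>
    mul_nonneg ((one_apply_nonneg i k).trans (hA i k)) (hB k j)
  calc B i j ≤ A i i * B i j := le_mul_of_one_le_left (hB i j) (by simpa using hA i i)
    _ ≤ ∑ k, A i k * B k j := Finset.single_le_sum (fun k _ => hA₀ k) (Finset.mem_univ i)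

variable (n R) in
def oneLESubmonoid : Submonoid (Matrix n n R) where
  carrier := {A | ∀ i j, (1 : Matrix n n R) i j ≤ A i j}
  one_mem' _ _ := le_rfl
  mul_mem' {_ _} hA hB i j := (hA i j).trans <| apply_le_mul_apply_of_one_le_right
    (fun i j => (one_apply_nonneg i j).trans (hA i j)) hB i j

lemma apply_le_list_prod_apply_of_mem {L : List (Matrix n n R)}
    (hL : ∀ A ∈ L, A ∈ oneLESubmonoid n R) {A : Matrix n n R} (hA : A ∈ L) (i j : n) :
    A i j ≤ L.prod i j := by
  induction L with
  | nil => simp at hA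
  | cons B L ih =>
    have hB : B ∈ oneLESubmonoid n R := hL B List.mem_cons_self
    have hLprod : L.prod ∈ oneLESubmonoid n R :=
      Submonoid.list_prod_mem _ fun C hC => hL C (List.mem_cons_of_mem B hC)
    rw [List.prod_cons]
    rcases List.mem_cons.mp hA with rfl | hA
    · exact apply_le_mul_apply_of_one_le_right
        (fun i j => (one_apply_nonneg i j).trans (hB i j)) hLprod i j
    · exact (ih (fun C hC => hL C (List.mem_cons_of_mem B hC)) hA).trans
        (apply_le_mul_apply_of_one_le_left hB
          (fun i j => (one_apply_nonneg i j).trans (hLprod i j)) i j)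

end EntrywiseOrder

lemma two_lt_trace_of_det_eq_one_of_pos {R : Type*} [CommRing R] [LinearOrder R]
    [IsStrictOrderedRing R] {A : Matrix (Fin 2) (Fin 2) R} (hdet : A.det = 1)
    (hpos : ∀ i j, 0 < A i j) : 2 < A.trace := by
  rw [det_fin_two] at hdet
  rw [trace_fin_two]
  have h00 := hpos 0 0
  have h11 := hpos 1 1
  have hbc := mul_pos (hpos 0 1) (hpos 1 0)
  nlinarith [sq_nonneg (A 0 0 - A 1 1)]

end Matrix

lemma coe_sbar₁_inv :
    ((sbar₁⁻¹ : Matrix.SpecialLinearGroup (Fin 2) ℤ) : Matrix (Fin 2) (Fin 2) ℤ) =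
      !![1, 0; 1, 1] := by
  ext i j
  fin_cases i <;> fin_cases j <;> rfl

lemma coe_sbar₁_mul_sbar₂_mul_sbar₁_pow_two_mul (n : ℕ) :
    (((sbar₁ * sbar₂ * sbar₁) ^ (2 * n) : Matrix.SpecialLinearGroup (Fin 2) ℤ) :
      Matrix (Fin 2) (Fin 2) ℤ) = (-1) ^ n := by
  have hsq : ((sbar₁ * sbar₂ * sbar₁ : Matrix.SpecialLinearGroup (Fin 2) ℤ) :
      Matrix (Fin 2) (Fin 2) ℤ) ^ 2 = -1 := by
    ext i j
    fin_cases i <;> fin_cases j <;> rfl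
  rw [Matrix.SpecialLinearGroup.coe_pow, pow_mul, hsq]

lemma pos_of_mixed_word {l : List Bool} (h₁ : true ∈ l) (h₂ : false ∈ l) (i j : Fin 2) :
    0 < (((l.map fun b => if b then sbar₁⁻¹ else sbar₂).prod :
      Matrix.SpecialLinearGroup (Fin 2) ℤ) : Matrix (Fin 2) (Fin 2) ℤ) i j := by
  set L := l.map fun b =>
    ((if b then sbar₁⁻¹ else sbar₂ : Matrix.SpecialLinearGroup (Fin 2) ℤ) :
      Matrix (Fin 2) (Fin 2) ℤ)
  have hcoe : (((l.map fun b => if b then sbar₁⁻¹ else sbar₂).prod :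
      Matrix.SpecialLinearGroup (Fin 2) ℤ) : Matrix (Fin 2) (Fin 2) ℤ) = L.prod := by
    rw [← Matrix.SpecialLinearGroup.coeMonoidHom_apply, map_list_prod, List.map_map]
    rfl
  have hL : ∀ A ∈ L, A ∈ Matrix.oneLESubmonoid (Fin 2) ℤ := by
    simp only [L, List.forall_mem_map]
    intro b _ i j
    cases b <;> fin_cases i <;> fin_cases j <;> decide
  have hlower := Matrix.apply_le_list_prod_apply_of_mem hL (List.mem_map_of_mem h₁)
  have hupper := Matrix.apply_le_list_prod_apply_of_mem hL (List.mem_map_of_mem h₂)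
  rw [hcoe]
  fin_cases i <;> fin_cases j
  · exact (hupper 0 0).trans_lt' (by decide)
  · exact (hupper 0 1).trans_lt' (by decide)
  · exact (hlower 1 0).trans_lt' (by rw [if_pos rfl, coe_sbar₁_inv]; decide)
  · exact (hupper 1 1).trans_lt' (by decide)

theorem hyperbolic_of_mixed_word_general (n : ℕ)
    (l : List Bool) (h₁ : true ∈ l) (h₂ : false ∈ l)
    (W : Matrix.SpecialLinearGroup (Fin 2) ℤ)
    (hW : W = (l.map fun b => if b then sbar₁⁻¹ else sbar₂).prod)
    (M : Matrix.SpecialLinearGroup (Fin 2) ℤ)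
    (hM : M = (sbar₁ * sbar₂ * sbar₁) ^ (2 * n) * W) :
    ((∀ i j, 0 < (M : Matrix (Fin 2) (Fin 2) ℤ) i j) ∨
      (∀ i j, (M : Matrix (Fin 2) (Fin 2) ℤ) i j < 0)) ∧
    2 < |Matrix.trace (M : Matrix (Fin 2) (Fin 2) ℤ)| := by
  have hpos : ∀ i j, 0 < (W : Matrix (Fin 2) (Fin 2) ℤ) i j :=
    hW ▸ pos_of_mixed_word h₁ h₂
  have htrace : 2 < (W : Matrix (Fin 2) (Fin 2) ℤ).trace :=
    Matrix.two_lt_trace_of_det_eq_one_of_pos W.2 hpos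
  have hMW :
      (M : Matrix (Fin 2) (Fin 2) ℤ) = (-1) ^ n * (W : Matrix (Fin 2) (Fin 2) ℤ) := by
    rw [hM, Matrix.SpecialLinearGroup.coe_mul, coe_sbar₁_mul_sbar₂_mul_sbar₁_pow_two_mul]
  rcases neg_one_pow_eq_or (Matrix (Fin 2) (Fin 2) ℤ) n with h | h
  · rw [hMW, h, one_mul]
    exact ⟨Or.inl hpos, htrace.trans_le (le_abs_self _)⟩
  · rw [hMW, h, neg_one_mul, Matrix.trace_neg, abs_neg]
    exact ⟨Or.inr fun i j => neg_neg_of_pos (hpos i j), htrace.trans_le (le_abs_self _)⟩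

/-- Any matrix `(σ̄₁σ̄₂σ̄₁)^{2n} W` in `SL(2,ℤ)`, where `n ≥ 1` and `W` is a product
of matrices `σ̄₁⁻¹ = [[1,0],[1,1]]` and `σ̄₂ = [[1,1],[0,1]]` containing at least one
factor of each, has all entries of the same sign and trace of absolute value
strictly greater than `2` (i.e., it is hyperbolic). -/
theorem hyperbolic_of_mixed_word (n : ℕ) (hn : 1 ≤ n)
    (l : List Bool) (h₁ : true ∈ l) (h₂ : false ∈ l)
    (W : Matrix.SpecialLinearGroup (Fin 2) ℤ)
    (hW : W = (l.map fun b => if b then sbar₁⁻¹ else sbar₂).prod)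
    (M : Matrix.SpecialLinearGroup (Fin 2) ℤ)
    (hM : M = (sbar₁ * sbar₂ * sbar₁) ^ (2 * n) * W) :
    ((∀ i j, 0 < (M : Matrix (Fin 2) (Fin 2) ℤ) i j) ∨
      (∀ i j, (M : Matrix (Fin 2) (Fin 2) ℤ) i j < 0)) ∧
    2 < |Matrix.trace (M : Matrix (Fin 2) (Fin 2) ℤ)| :=
  hyperbolic_of_mixed_word_general n l h₁ h₂ W hW M hM
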